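/- Let X and Y be independent finitely supported random variables on G = 𝔽₂ⁿ and let W ⊆ V be subspaces of G. Then s[X | π_V(X); Y | π_V(Y)] ≤ s[X | π_W(X); Y | π_W(Y)] + s[π_W(X) | π_V(X); π_W(Y) | π_V(Y)]. -/
import Mathlib


open Real Pointwise

noncomputable section

abbrev Fvec (n : ℕ) : Type := Fin n → ZMod 2

/-- Shannon entropy (natural log) of a finitely supported distribution. -/
def ent {A : Type*} (p : A → ℝ) : ℝ := ∑ᶠ a, Real.negMulLog (p a)

/-- `p` is a (finitely supported) probability distribution. -/
def IsDist {A : Type*} (p : A → ℝ) : Prop := (∀ a, 0 ≤ p a) ∧ ∑ᶠ a, p a = 1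

/-- Pushforward of a distribution along a map: the distribution of `f(X)` for `X ∼ p`. -/
def push {A B : Type*} (f : A → B) (p : A → ℝ) : B → ℝ := fun b => ∑ᶠ a ∈ f ⁻¹' {b}, p a

/-- Joint distribution of a pair of independent random variables. -/
def prodDist {A B : Type*} (p : A → ℝ) (q : B → ℝ) : A × B → ℝ := fun z => p z.1 * q z.2

/-- Distribution of `X + Y` for independent `X ∼ p`, `Y ∼ q`. -/
def conv {A : Type*} [AddGroup A] (p q : A → ℝ) : A → ℝ := fun z => ∑ᶠ x, p x * q (z - x)

/-- The distribution of `X` conditioned on `U = b`, where `r` is the joint distribution of `(X, U)`. -/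
def fiber {A B : Type*} (r : A × B → ℝ) (b : B) : A → ℝ := fun a => r (a, b) / push Prod.snd r b

/-- Conditional entropy `H[X | U]` of a joint distribution `r` of `(X, U)`. -/
def condEnt {A B : Type*} (r : A × B → ℝ) : ℝ := ∑ᶠ b, push Prod.snd r b * ent (fiber r b)

/-- Doubling mass `s[X ; Y]` (of independent copies with distributions `p`, `q`). -/
def sDouble {A : Type*} [AddGroup A] (p q : A → ℝ) : ℝ := ent p + ent q - ent (conv p q)

/-- Conditional doubling mass `s[X | U ; Y | W] = 𝔼_{u ∼ U, w ∼ W} s[X_u ; Y_w]`,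
where `r1`, `r2` are the joint distributions of `(X, U)` and `(Y, W)`. -/
def sCond {A U W : Type*} [AddGroup A] (r1 : A × U → ℝ) (r2 : A × W → ℝ) : ℝ :=
  ∑ᶠ u, ∑ᶠ w, push Prod.snd r1 u * push Prod.snd r2 w * sDouble (fiber r1 u) (fiber r2 w)

/-- Conditional mutual information `I[A : B | S]` of a joint distribution of `(A, B, S)`. -/
def condMI {A B S : Type*} (r : A × B × S → ℝ) : ℝ :=
  ent (push (fun z => (z.1, z.2.2)) r) + ent (push (fun z => z.2) r)
    - ent r - ent (push (fun z => z.2.2) r)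

/-- Uniform distribution on a set. -/
def unifOn {A : Type*} (s : Set A) : A → ℝ := s.indicator fun _ => (Nat.card s : ℝ)⁻¹

/-- Entropic Ruzsa distance `d[X ; Y]`. -/
def dRuzsa {A : Type*} [AddGroup A] (p q : A → ℝ) : ℝ := ent (conv p q) - ent p / 2 - ent q / 2

/-- Joint distribution of `(X, X + Y)` for independent `X ∼ p`, `Y ∼ q`. -/
def jointSum {A : Type*} [AddGroup A] (p q : A → ℝ) : A × A → ℝ :=
  push (fun z : A × A => (z.1, z.1 + z.2)) (prodDist p q)

/-- Joint distribution of `(X, π_V(X))`. -/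
def selfProj {n : ℕ} (V : Submodule (ZMod 2) (Fvec n)) (p : Fvec n → ℝ) :
    Fvec n × (Fvec n ⧸ V) → ℝ := push (fun x => (x, V.mkQ x)) p

/-- Joint distribution of independent `(X₁, X₂, Y₁, Y₂)` with `X₁, X₂ ∼ p` and `Y₁, Y₂ ∼ q`. -/
def quad {A : Type*} (p q : A → ℝ) : A × A × A × A → ℝ :=
  fun z => p z.1 * p z.2.1 * q z.2.2.1 * q z.2.2.2

/-- Distribution of `X₁ + ⋯ + X_k` for independent `Xᵢ ∼ p i`. -/
def indepSum {A : Type*} [AddCommGroup A] (k : ℕ) (p : Fin k → A → ℝ) : A → ℝ :=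
  push (fun x : Fin k → A => ∑ i, x i) (fun x => ∏ i, p i (x i))

/-- Statement `A(η, L, c)` from the paper. -/
def StA (η L c : ℝ) : Prop :=
  ∀ (n : ℕ) (p q : Fvec n → ℝ), IsDist p → IsDist q →
    ent (conv p q) ≤ (1 - η) * (ent p + ent q) →
    ∃ V : Submodule (ZMod 2) (Fvec n),
      ent (unifOn (V : Set (Fvec n))) ≤ L * (ent p + ent q) ∧
      ent (push V.mkQ p) + ent (push V.mkQ q) ≤ (1 - c) * (ent p + ent q)

/-- Statement `B(η, ε, L)` from the paper. -/
def StB (η ε L : ℝ) : Prop :=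
  ∀ (n : ℕ) (p q : Fvec n → ℝ), IsDist p → IsDist q →
    ∃ V : Submodule (ZMod 2) (Fvec n),
      ent (unifOn (V : Set (Fvec n))) ≤ L * (ent p + ent q) ∧
      ent (conv (push V.mkQ p) (push V.mkQ q)) ≥
        (1 - η) * (ent (push V.mkQ p) + ent (push V.mkQ q)) - ε * (ent p + ent q)



/-! ### Auxiliary lemmas -/

section Helpers

open Finset Real
open scoped Classical

variable {A B : Type*} [Fintype A] [Fintype B]

lemma ent_fin (p : A → ℝ) : ent p = ∑ a, Real.negMulLog (p a) :=
  finsum_eq_sum_of_fintype _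

lemma push_apply' (f : A → B) (p : A → ℝ) (b : B) :
    push f p b = ∑ a, if f a = b then p a else 0 := by
  have h : f ⁻¹' {b} = ↑(Finset.univ.filter fun a => f a = b) := by
    ext a; simp
  rw [push, h, finsum_mem_coe_finset, Finset.sum_filter]

lemma sum_push (f : A → B) (m : A → ℝ) (F : B → ℝ) :
    ∑ b, push f m b * F b = ∑ a, m a * F (f a) := by
  have h : ∀ b, push f m b * F b
      = ∑ a ∈ Finset.univ.filter (fun a => f a = b), m a * F (f a) := by
    intro b
    rw [push_apply', Finset.sum_mul, Finset.sum_filter]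
    refine Finset.sum_congr rfl fun a _ => ?_
    by_cases hfa : f a = b <;> simp [hfa]
  simp_rw [h]
  exact Finset.sum_fiberwise _ _ _

lemma push_sum (f : A → B) (p : A → ℝ) : ∑ b, push f p b = ∑ a, p a := by
  simpa using sum_push f p (fun _ => 1)

lemma push_push {C : Type*} [Fintype C] (f : A → B) (g : B → C) (p : A → ℝ) :
    push g (push f p) = push (fun a => g (f a)) p := by
  funext c
  rw [push_apply' g, push_apply' (fun a => g (f a))]
  have h : ∀ b, (if g b = c then push f p b else 0)
      = push f p b * (if g b = c then 1 else 0) := by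
    intro b; by_cases hgb : g b = c <;> simp [hgb]
  simp_rw [h]
  rw [sum_push]
  refine Finset.sum_congr rfl fun a _ => ?_
  by_cases hga : g (f a) = c <;> simp [hga]

lemma push_nonneg (f : A → B) (p : A → ℝ) (hp : ∀ a, 0 ≤ p a) (b : B) :
    0 ≤ push f p b := by
  rw [push_apply']
  exact Finset.sum_nonneg fun a _ => by by_cases h : f a = b <;> simp [h, hp a]

lemma le_push (f : A → B) (p : A → ℝ) (hp : ∀ a, 0 ≤ p a) (a : A) :
    p a ≤ push f p (f a) := by
  rw [push_apply']
  have h := Finset.single_le_sum (f := fun a' => if f a' = f a then p a' else 0)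
    (fun a' _ => by by_cases h : f a' = f a <;> simp [h, hp a']) (Finset.mem_univ a)
  simpa using h

lemma push_apply_inj (f : A → B) (hf : Function.Injective f) (p : A → ℝ) (a : A) :
    push f p (f a) = p a := by
  rw [push_apply', Finset.sum_eq_single a]
  · simp
  · intro a' _ hne
    rw [if_neg]
    exact fun e => hne (hf e)
  · simp

lemma ent_push_inj (f : A → B) (hf : Function.Injective f) (p : A → ℝ) :
    ent (push f p) = ent p := by
  rw [ent_fin, ent_fin]
  have h1 : ∑ a, Real.negMulLog (p a) = ∑ a, Real.negMulLog (push f p (f a)) := by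
    refine Finset.sum_congr rfl fun a _ => ?_
    rw [push_apply_inj f hf]
  have h2 : ∑ a : A, Real.negMulLog (push f p (f a))
      = ∑ b ∈ Finset.univ.image f, Real.negMulLog (push f p b) :=
    (Finset.sum_image (f := fun b => Real.negMulLog (push f p b))
      (fun x _ y _ h => hf h)).symm
  rw [h1, h2]
  refine (Finset.sum_subset (Finset.subset_univ _) ?_).symm
  intro b _ hb
  have hz : push f p b = 0 := by
    rw [push_apply']
    apply Finset.sum_eq_zero
    intro a _
    rw [if_neg]
    exact fun e => hb (Finset.mem_image.2 ⟨a, Finset.mem_univ a, e⟩)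
  rw [hz, Real.negMulLog_zero]

lemma push_snd_apply (r : A × B → ℝ) (b : B) :
    push Prod.snd r b = ∑ a, r (a, b) := by
  rw [push_apply', Fintype.sum_prod_type]
  refine Finset.sum_congr rfl fun a _ => ?_
  simp [Finset.sum_ite_eq']

lemma ent_push_log (f : A → B) (m : A → ℝ) :
    ent (push f m) = -∑ a, m a * Real.log (push f m (f a)) := by
  rw [ent_fin]
  have h : ∀ b, Real.negMulLog (push f m b) = -(push f m b * Real.log (push f m b)) := by
    intro b; rw [Real.negMulLog]; ring
  simp_rw [h]
  rw [Finset.sum_neg_distrib]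
  exact congrArg Neg.neg (sum_push f m (fun b => Real.log (push f m b)))

lemma chain (r : A × B → ℝ) (h0 : ∀ z, 0 ≤ r z) :
    ∑ b, push Prod.snd r b * ent (fiber r b) = ent r - ent (push Prod.snd r) := by
  have key : ∀ b, push Prod.snd r b * ent (fiber r b)
      = (∑ a, Real.negMulLog (r (a, b))) - Real.negMulLog (push Prod.snd r b) := by
    intro b
    by_cases hc : push Prod.snd r b = 0
    · have hz : ∀ a, r (a, b) = 0 := by
        intro a
        have h1 : ∑ a, r (a, b) = 0 := by rw [← push_snd_apply]; exact hc
        exact (Finset.sum_eq_zero_iff_of_nonneg (fun a _ => h0 (a, b))).1 h1 a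
          (Finset.mem_univ a)
      simp [hc, hz]
    · have hfib : ∀ a, r (a, b) = push Prod.snd r b * fiber r b a := by
        intro a
        simp only [fiber]
        field_simp
      have hsum1 : ∑ a, fiber r b a = 1 := by
        have h2 : ∑ a, fiber r b a = (∑ a, r (a, b)) / push Prod.snd r b := by
          rw [Finset.sum_div]
          exact Finset.sum_congr rfl fun a _ => rfl
        rw [h2, ← push_snd_apply, div_self hc]
      have h3 : ∑ a, Real.negMulLog (r (a, b))
          = ∑ a, (fiber r b a * Real.negMulLog (push Prod.snd r b)
              + push Prod.snd r b * Real.negMulLog (fiber r b a)) := by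
        refine Finset.sum_congr rfl fun a _ => ?_
        rw [hfib a, Real.negMulLog_mul]
      rw [h3, Finset.sum_add_distrib, ← Finset.sum_mul, hsum1, one_mul, ← Finset.mul_sum,
        ← ent_fin]
      ring
  simp_rw [key]
  rw [Finset.sum_sub_distrib, ← ent_fin]
  congr 1
  rw [ent_fin, Fintype.sum_prod_type]
  exact Finset.sum_comm

lemma master {G H C C' : Type*} [Fintype G] [Fintype H] [Fintype C] [Fintype C']
    [AddCommGroup H]
    (p q : G → ℝ) (hp : IsDist p) (hq : IsDist q)
    (φ φ' : G → H) (κ : G → C) (κ' : G → C') :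
    sCond (push (fun x => (φ x, κ x)) p) (push (fun y => (φ' y, κ' y)) q)
      = (ent (push (fun x => (φ x, κ x)) p) - ent (push κ p))
        + (ent (push (fun y => (φ' y, κ' y)) q) - ent (push κ' q))
        - (ent (push (fun z : G × G => (φ z.1 + φ' z.2, (κ z.1, κ' z.2))) (prodDist p q))
            - ent (push (fun z : G × G => (κ z.1, κ' z.2)) (prodDist p q))) := by
  set r1 := push (fun x => (φ x, κ x)) p with hr1
  set r2 := push (fun y => (φ' y, κ' y)) q with hr2
  set m := prodDist p q with hm
  set R := push (fun z : G × G => (φ z.1 + φ' z.2, (κ z.1, κ' z.2))) m with hR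
  have h0p := hp.1
  have h0q := hq.1
  have hp1 : ∑ x, p x = 1 := by rw [← finsum_eq_sum_of_fintype]; exact hp.2
  have hq1 : ∑ y, q y = 1 := by rw [← finsum_eq_sum_of_fintype]; exact hq.2
  have h0r1 : ∀ z, 0 ≤ r1 z := fun z => push_nonneg _ p h0p z
  have h0r2 : ∀ z, 0 ≤ r2 z := fun z => push_nonneg _ q h0q z
  have h0R : ∀ z, 0 ≤ R z := fun z =>
    push_nonneg _ m (fun w => mul_nonneg (h0p _) (h0q _)) z
  have hs1 : push Prod.snd r1 = push κ p := push_push _ _ _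
  have hs2 : push Prod.snd r2 = push κ' q := push_push _ _ _
  have hsR : push Prod.snd R = push (fun z : G × G => (κ z.1, κ' z.2)) m := push_push _ _ _
  have hKm : ∀ (u : C) (w : C'),
      push (fun z : G × G => (κ z.1, κ' z.2)) m (u, w) = push κ p u * push κ' q w := by
    intro u w
    rw [push_apply', push_apply', push_apply', Finset.sum_mul_sum, Fintype.sum_prod_type]
    refine Finset.sum_congr rfl fun x _ => Finset.sum_congr rfl fun y _ => ?_
    by_cases h1 : κ x = u <;> by_cases h2 : κ' y = w <;>
      simp [hm, prodDist, Prod.ext_iff, h1, h2]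
  have hRw : ∀ (u : C) (w : C'),
      push Prod.snd R (u, w) = push Prod.snd r1 u * push Prod.snd r2 w := by
    intro u w; rw [hsR, hs1, hs2]; exact hKm u w
  have hfibR : ∀ (u : C) (w : C'), fiber R (u, w) = conv (fiber r1 u) (fiber r2 w) := by
    intro u w
    funext z
    have hcore : R (z, (u, w)) = ∑ h, r1 (h, u) * r2 (z - h, w) := by
      rw [hR, push_apply', Fintype.sum_prod_type]
      have hexp : ∀ h : H, r1 (h, u) * r2 (z - h, w)
          = ∑ x, ∑ y, (if (φ x, κ x) = (h, u) then p x else 0)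
              * (if (φ' y, κ' y) = (z - h, w) then q y else 0) := by
        intro h
        rw [hr1, hr2, push_apply', push_apply', Finset.sum_mul_sum]
        refine Finset.sum_congr rfl fun i _ => Finset.sum_congr rfl fun j _ => ?_
        congr
      simp_rw [hexp]
      conv_rhs => rw [Finset.sum_comm]
      refine Finset.sum_congr rfl fun x _ => ?_
      conv_rhs => rw [Finset.sum_comm]
      refine Finset.sum_congr rfl fun y _ => ?_
      have hcol : (∑ h, (if (φ x, κ x) = (h, u) then p x else 0)
            * (if (φ' y, κ' y) = (z - h, w) then q y else 0))
          = (if (φ x, κ x) = (φ x, u) then p x else 0)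
            * (if (φ' y, κ' y) = (z - φ x, w) then q y else 0) :=
        Finset.sum_eq_single_of_mem (φ x) (Finset.mem_univ _) (fun h _ hne => by
          rw [if_neg fun e => hne (Prod.ext_iff.1 e).1.symm, zero_mul])
      rw [hcol]
      have h4 : φ' y = z - φ x ↔ φ x + φ' y = z := by
        rw [eq_sub_iff_add_eq, add_comm]
      by_cases h1 : κ x = u <;> by_cases h2 : κ' y = w <;>
        by_cases h3 : φ x + φ' y = z <;>
        simp [hm, prodDist, Prod.ext_iff, h1, h2, h3, h4]
    have hα : push Prod.snd R (u, w) = push Prod.snd r1 u * push Prod.snd r2 w := hRw u w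
    show R (z, (u, w)) / push Prod.snd R (u, w) = conv (fiber r1 u) (fiber r2 w) z
    rw [conv, finsum_eq_sum_of_fintype, hcore, hα, Finset.sum_div]
    refine Finset.sum_congr rfl fun h _ => ?_
    show r1 (h, u) * r2 (z - h, w) / (push Prod.snd r1 u * push Prod.snd r2 w)
        = fiber r1 u h * fiber r2 w (z - h)
    simp only [fiber]
    rw [div_mul_div_comm]
  rw [sCond, finsum_eq_sum_of_fintype]
  simp only [finsum_eq_sum_of_fintype, sDouble]
  have hT : ∀ (u : C) (w : C'), push Prod.snd r1 u * push Prod.snd r2 w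
      * (ent (fiber r1 u) + ent (fiber r2 w) - ent (conv (fiber r1 u) (fiber r2 w)))
      = push Prod.snd r1 u * ent (fiber r1 u) * push Prod.snd r2 w
        + push Prod.snd r1 u * (push Prod.snd r2 w * ent (fiber r2 w))
        - push Prod.snd R (u, w) * ent (fiber R (u, w)) := by
    intro u w
    rw [hRw u w, hfibR u w]
    ring
  simp_rw [hT, Finset.sum_sub_distrib, Finset.sum_add_distrib]
  have hb1 : ∑ u, push Prod.snd r1 u = 1 := by rw [hs1, push_sum]; exact hp1
  have hb2 : ∑ w, push Prod.snd r2 w = 1 := by rw [hs2, push_sum]; exact hq1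
  have hT1 : (∑ u, ∑ w, push Prod.snd r1 u * ent (fiber r1 u) * push Prod.snd r2 w)
      = ent r1 - ent (push κ p) := by
    have h5 : ∀ u : C, ∑ w, push Prod.snd r1 u * ent (fiber r1 u) * push Prod.snd r2 w
        = push Prod.snd r1 u * ent (fiber r1 u) := by
      intro u; rw [← Finset.mul_sum, hb2, mul_one]
    simp_rw [h5]
    rw [chain r1 h0r1, hs1]
  have hT2 : (∑ u, ∑ w, push Prod.snd r1 u * (push Prod.snd r2 w * ent (fiber r2 w)))
      = ent r2 - ent (push κ' q) := by
    simp_rw [← Finset.mul_sum]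
    rw [← Finset.sum_mul, hb1, one_mul, chain r2 h0r2, hs2]
  have hT3 : (∑ u, ∑ w, push Prod.snd R (u, w) * ent (fiber R (u, w)))
      = ent R - ent (push (fun z : G × G => (κ z.1, κ' z.2)) m) := by
    rw [← hsR, ← chain R h0R]
    exact (Fintype.sum_prod_type
      (fun b : C × C' => push Prod.snd R b * ent (fiber R b))).symm
  rw [hT1, hT2, hT3]

lemma submod {A Z U U' : Type*} [Fintype A] [Fintype Z] [Fintype U] [Fintype U']
    (m : A → ℝ) (hm0 : ∀ a, 0 ≤ m a) (hm1 : ∑ a, m a = 1)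
    (ζ : A → Z) (u : A → U) (σ : U → U') :
    ent (push (fun a => (ζ a, u a)) m) + ent (push (fun a => σ (u a)) m)
      ≤ ent (push u m) + ent (push (fun a => (ζ a, σ (u a))) m) := by
  set P := push (fun a => (ζ a, u a)) m with hP
  set Q := push u m with hQ
  set P' := push (fun a => (ζ a, σ (u a))) m with hP'
  set Q' := push (fun a => σ (u a)) m with hQ'
  have hQn : ∀ v, 0 ≤ Q v := fun v => push_nonneg _ m hm0 v
  have hP'n : ∀ z, 0 ≤ P' z := fun z => push_nonneg _ m hm0 z
  have hQ'n : ∀ v, 0 ≤ Q' v := fun v => push_nonneg _ m hm0 v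
  have hmarg : ∀ v', ∑ z, P' (z, v') = Q' v' := by
    intro v'
    have h1 : push Prod.snd P' = Q' := by rw [hP', push_push]
    rw [← h1, push_snd_apply]
  have key2 : ∑ a, m a
      * (Q (u a) * P' (ζ a, σ (u a)) / (P (ζ a, u a) * Q' (σ (u a)))) ≤ 1 := by
    have e : ∑ a, m a * (Q (u a) * P' (ζ a, σ (u a)) / (P (ζ a, u a) * Q' (σ (u a))))
        = ∑ zv : Z × U, P zv * (Q zv.2 * P' (zv.1, σ zv.2) / (P zv * Q' (σ zv.2))) :=
      (sum_push (fun a => (ζ a, u a)) m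
        (fun zv => Q zv.2 * P' (zv.1, σ zv.2) / (P zv * Q' (σ zv.2)))).symm
    rw [e]
    have step : ∀ zv : Z × U, P zv * (Q zv.2 * P' (zv.1, σ zv.2) / (P zv * Q' (σ zv.2)))
        ≤ Q zv.2 * P' (zv.1, σ zv.2) / Q' (σ zv.2) := by
      intro zv
      by_cases hz : P zv = 0
      · rw [hz, zero_mul]
        exact div_nonneg (mul_nonneg (hQn _) (hP'n _)) (hQ'n _)
      · by_cases hz' : Q' (σ zv.2) = 0
        · have hp'0 : P' (zv.1, σ zv.2) = 0 := by
            have h1 := hmarg (σ zv.2)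
            have h2 := (Finset.sum_eq_zero_iff_of_nonneg
              (fun z _ => hP'n (z, σ zv.2))).1 (by rw [h1, hz'])
            exact h2 zv.1 (Finset.mem_univ _)
          rw [hp'0]
          simp
        · have heq : P zv * (Q zv.2 * P' (zv.1, σ zv.2) / (P zv * Q' (σ zv.2)))
              = Q zv.2 * P' (zv.1, σ zv.2) / Q' (σ zv.2) := by
            field_simp
          rw [heq]
    calc ∑ zv : Z × U, P zv * (Q zv.2 * P' (zv.1, σ zv.2) / (P zv * Q' (σ zv.2)))
        ≤ ∑ zv : Z × U, Q zv.2 * P' (zv.1, σ zv.2) / Q' (σ zv.2) :=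
          Finset.sum_le_sum (fun zv _ => step zv)
      _ = ∑ v : U, Q v * (∑ z, P' (z, σ v) / Q' (σ v)) := by
          rw [Fintype.sum_prod_type, Finset.sum_comm]
          refine Finset.sum_congr rfl fun v _ => ?_
          rw [Finset.mul_sum]
          exact Finset.sum_congr rfl fun z _ => mul_div_assoc _ _ _
      _ = ∑ v' : U', push σ Q v' * (∑ z, P' (z, v') / Q' v') :=
          (sum_push σ Q (fun v' => ∑ z, P' (z, v') / Q' v')).symm
      _ ≤ ∑ v' : U', ∑ z, P' (z, v') := by
          refine Finset.sum_le_sum fun v' _ => ?_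
          have hpsQ : push σ Q v' = Q' v' := by
            rw [hQ, push_push, ← hQ']
          rw [hpsQ]
          by_cases hz : Q' v' = 0
          · rw [hz, zero_mul]
            exact Finset.sum_nonneg fun z _ => hP'n _
          · have h6 : Q' v' * (∑ z, P' (z, v') / Q' v') = ∑ z, P' (z, v') := by
              rw [← Finset.sum_div]
              field_simp
            rw [h6]
      _ = ∑ zv : Z × U', P' zv := by
          rw [Fintype.sum_prod_type]
          exact Finset.sum_comm
      _ = 1 := by rw [hP', push_sum]; exact hm1
  have hstep1 : ∀ a, m a * (Real.log (Q (u a)) + Real.log (P' (ζ a, σ (u a)))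
      - Real.log (P (ζ a, u a)) - Real.log (Q' (σ (u a))))
      ≤ m a * (Q (u a) * P' (ζ a, σ (u a)) / (P (ζ a, u a) * Q' (σ (u a))) - 1) := by
    intro a
    rcases eq_or_lt_of_le (hm0 a) with h | h
    · rw [← h, zero_mul, zero_mul]
    · have hPp : 0 < P (ζ a, u a) :=
        lt_of_lt_of_le h (le_push (fun a => (ζ a, u a)) m hm0 a)
      have hQp : 0 < Q (u a) := lt_of_lt_of_le h (le_push u m hm0 a)
      have hP'p : 0 < P' (ζ a, σ (u a)) :=
        lt_of_lt_of_le h (le_push (fun a => (ζ a, σ (u a))) m hm0 a)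
      have hQ'p : 0 < Q' (σ (u a)) :=
        lt_of_lt_of_le h (le_push (fun a => σ (u a)) m hm0 a)
      have hRpos : 0 < Q (u a) * P' (ζ a, σ (u a)) / (P (ζ a, u a) * Q' (σ (u a))) := by
        positivity
      have hlog : Real.log (Q (u a) * P' (ζ a, σ (u a)) / (P (ζ a, u a) * Q' (σ (u a))))
          = Real.log (Q (u a)) + Real.log (P' (ζ a, σ (u a)))
            - Real.log (P (ζ a, u a)) - Real.log (Q' (σ (u a))) := by
        rw [Real.log_div (by positivity) (by positivity),
          Real.log_mul (ne_of_gt hQp) (ne_of_gt hP'p),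
          Real.log_mul (ne_of_gt hPp) (ne_of_gt hQ'p)]
        ring
      rw [← hlog]
      exact mul_le_mul_of_nonneg_left (Real.log_le_sub_one_of_pos hRpos) (le_of_lt h)
  have key : ∑ a, m a * (Real.log (Q (u a)) + Real.log (P' (ζ a, σ (u a)))
      - Real.log (P (ζ a, u a)) - Real.log (Q' (σ (u a)))) ≤ 0 := by
    calc ∑ a, m a * (Real.log (Q (u a)) + Real.log (P' (ζ a, σ (u a)))
          - Real.log (P (ζ a, u a)) - Real.log (Q' (σ (u a))))
        ≤ ∑ a, m a * (Q (u a) * P' (ζ a, σ (u a)) / (P (ζ a, u a) * Q' (σ (u a))) - 1) :=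
          Finset.sum_le_sum fun a _ => hstep1 a
      _ = (∑ a, m a * (Q (u a) * P' (ζ a, σ (u a)) / (P (ζ a, u a) * Q' (σ (u a)))))
            - ∑ a, m a := by
          simp_rw [mul_sub, mul_one]
          rw [Finset.sum_sub_distrib]
      _ ≤ 1 - 1 := by rw [hm1]; exact sub_le_sub_right key2 _
      _ = 0 := by ring
  have e1 : ent P = -∑ a, m a * Real.log (P (ζ a, u a)) := ent_push_log _ m
  have e2 : ent Q = -∑ a, m a * Real.log (Q (u a)) := ent_push_log _ m
  have e3 : ent P' = -∑ a, m a * Real.log (P' (ζ a, σ (u a))) := ent_push_log _ m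
  have e4 : ent Q' = -∑ a, m a * Real.log (Q' (σ (u a))) := ent_push_log _ m
  have hsplit : ∑ a, m a * (Real.log (Q (u a)) + Real.log (P' (ζ a, σ (u a)))
      - Real.log (P (ζ a, u a)) - Real.log (Q' (σ (u a))))
      = (∑ a, m a * Real.log (Q (u a))) + (∑ a, m a * Real.log (P' (ζ a, σ (u a))))
        - (∑ a, m a * Real.log (P (ζ a, u a))) - (∑ a, m a * Real.log (Q' (σ (u a)))) := by
    rw [← Finset.sum_add_distrib, ← Finset.sum_sub_distrib, ← Finset.sum_sub_distrib]
    exact Finset.sum_congr rfl fun a _ => by ring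
  rw [e1, e2, e3, e4]
  linarith [key, hsplit]

end Helpers

/-- For independent `X ∼ p`, `Y ∼ q` and subspaces `W ⊆ V`,
`s[X | π_V(X); Y | π_V(Y)] ≤ s[X | π_W(X); Y | π_W(Y)] + s[π_W(X) | π_V(X); π_W(Y) | π_V(Y)]`. -/
theorem statement9 (n : ℕ) (p q : Fvec n → ℝ) (hp : IsDist p) (hq : IsDist q)
    (W V : Submodule (ZMod 2) (Fvec n)) (hWV : W ≤ V) :
    sCond (selfProj V p) (selfProj V q) ≤
      sCond (selfProj W p) (selfProj W q) +
        sCond (push (fun x => (W.mkQ x, V.mkQ x)) p) (push (fun y => (W.mkQ y, V.mkQ y)) q) := by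
  haveI : Fintype (Fvec n ⧸ W) := Fintype.ofFinite _
  haveI : Fintype (Fvec n ⧸ V) := Fintype.ofFinite _
  -- the canonical map `G ⧸ W → G ⧸ V`
  set ψ : (Fvec n ⧸ W) → (Fvec n ⧸ V) :=
    fun a => Submodule.mapQ W V LinearMap.id (fun x hx => hWV hx) a with hψdef
  have hψ : ∀ x : Fvec n, ψ (W.mkQ x) = V.mkQ x := by
    intro x
    simp [hψdef, Submodule.mapQ_apply]
  have hm0 : ∀ z : Fvec n × Fvec n, 0 ≤ prodDist p q z :=
    fun z => mul_nonneg (hp.1 _) (hq.1 _)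
  have hp1 : ∑ x, p x = 1 := by rw [← finsum_eq_sum_of_fintype]; exact hp.2
  have hq1 : ∑ y, q y = 1 := by rw [← finsum_eq_sum_of_fintype]; exact hq.2
  have hm1 : ∑ z : Fvec n × Fvec n, prodDist p q z = 1 := by
    simp only [prodDist]
    rw [Fintype.sum_prod_type, ← Finset.sum_mul_sum, hp1, hq1, mul_one]
  -- master identity, applied three times
  have hL : sCond (selfProj V p) (selfProj V q)
      = (ent (selfProj V p) - ent (push (fun x => V.mkQ x) p))
        + (ent (selfProj V q) - ent (push (fun x => V.mkQ x) q))
        - (ent (push (fun z : Fvec n × Fvec n =>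
              (z.1 + z.2, (V.mkQ z.1, V.mkQ z.2))) (prodDist p q))
            - ent (push (fun z : Fvec n × Fvec n =>
              (V.mkQ z.1, V.mkQ z.2)) (prodDist p q))) :=
    master p q hp hq (fun x => x) (fun x => x) (fun x => V.mkQ x) (fun x => V.mkQ x)
  have hWid : sCond (selfProj W p) (selfProj W q)
      = (ent (selfProj W p) - ent (push (fun x => W.mkQ x) p))
        + (ent (selfProj W q) - ent (push (fun x => W.mkQ x) q))
        - (ent (push (fun z : Fvec n × Fvec n =>
              (z.1 + z.2, (W.mkQ z.1, W.mkQ z.2))) (prodDist p q))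
            - ent (push (fun z : Fvec n × Fvec n =>
              (W.mkQ z.1, W.mkQ z.2)) (prodDist p q))) :=
    master p q hp hq (fun x => x) (fun x => x) (fun x => W.mkQ x) (fun x => W.mkQ x)
  have hMid : sCond (push (fun x => (W.mkQ x, V.mkQ x)) p)
        (push (fun y => (W.mkQ y, V.mkQ y)) q)
      = (ent (push (fun x => (W.mkQ x, V.mkQ x)) p) - ent (push (fun x => V.mkQ x) p))
        + (ent (push (fun y => (W.mkQ y, V.mkQ y)) q) - ent (push (fun x => V.mkQ x) q))
        - (ent (push (fun z : Fvec n × Fvec n =>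
              (W.mkQ z.1 + W.mkQ z.2, (V.mkQ z.1, V.mkQ z.2))) (prodDist p q))
            - ent (push (fun z : Fvec n × Fvec n =>
              (V.mkQ z.1, V.mkQ z.2)) (prodDist p q))) :=
    master p q hp hq (fun x => W.mkQ x) (fun x => W.mkQ x)
      (fun x => V.mkQ x) (fun x => V.mkQ x)
  -- entropy simplifications
  have hsp : ent (selfProj V p) = ent p :=
    ent_push_inj _ (fun a b h => congrArg Prod.fst h) p
  have hsq : ent (selfProj V q) = ent q :=
    ent_push_inj _ (fun a b h => congrArg Prod.fst h) q
  have hsp' : ent (selfProj W p) = ent p :=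
    ent_push_inj _ (fun a b h => congrArg Prod.fst h) p
  have hsq' : ent (selfProj W q) = ent q :=
    ent_push_inj _ (fun a b h => congrArg Prod.fst h) q
  have hmixp : ent (push (fun x => (W.mkQ x, V.mkQ x)) p)
      = ent (push (fun x => W.mkQ x) p) := by
    have hcomp : push (fun u => (u, ψ u)) (push (fun x => W.mkQ x) p)
        = push (fun x => (W.mkQ x, V.mkQ x)) p := by
      rw [push_push]
      congr 1
    rw [← hcomp]
    exact ent_push_inj _ (fun a b h => congrArg Prod.fst h) _
  have hmixq : ent (push (fun x => (W.mkQ x, V.mkQ x)) q)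
      = ent (push (fun x => W.mkQ x) q) := by
    have hcomp : push (fun u => (u, ψ u)) (push (fun x => W.mkQ x) q)
        = push (fun x => (W.mkQ x, V.mkQ x)) q := by
      rw [push_push]
      congr 1
    rw [← hcomp]
    exact ent_push_inj _ (fun a b h => congrArg Prod.fst h) _
  -- submodularity
  have hsub := submod (prodDist p q) hm0 hm1
    (fun z : Fvec n × Fvec n => z.1 + z.2)
    (fun z : Fvec n × Fvec n => (W.mkQ z.1, W.mkQ z.2))
    (fun w : (Fvec n ⧸ W) × (Fvec n ⧸ W) => (w.1 + w.2, (ψ w.1, ψ w.2)))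
  have hsub' :
      ent (push (fun z : Fvec n × Fvec n =>
          (z.1 + z.2, (W.mkQ z.1, W.mkQ z.2))) (prodDist p q))
        + ent (push (fun z : Fvec n × Fvec n =>
          (W.mkQ z.1 + W.mkQ z.2, (V.mkQ z.1, V.mkQ z.2))) (prodDist p q))
      ≤ ent (push (fun z : Fvec n × Fvec n =>
          (W.mkQ z.1, W.mkQ z.2)) (prodDist p q))
        + ent (push (fun z : Fvec n × Fvec n =>
          (z.1 + z.2, (W.mkQ z.1 + W.mkQ z.2, (V.mkQ z.1, V.mkQ z.2)))) (prodDist p q)) := by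
    have e2 : push (fun z : Fvec n × Fvec n =>
          (W.mkQ z.1 + W.mkQ z.2, (V.mkQ z.1, V.mkQ z.2))) (prodDist p q)
        = push (fun z : Fvec n × Fvec n =>
          (W.mkQ z.1 + W.mkQ z.2, (ψ (W.mkQ z.1), ψ (W.mkQ z.2)))) (prodDist p q) := by
      rfl
    have e4 : push (fun z : Fvec n × Fvec n =>
          (z.1 + z.2, (W.mkQ z.1 + W.mkQ z.2, (V.mkQ z.1, V.mkQ z.2)))) (prodDist p q)
        = push (fun z : Fvec n × Fvec n =>
          (z.1 + z.2, (W.mkQ z.1 + W.mkQ z.2, (ψ (W.mkQ z.1), ψ (W.mkQ z.2))))) (prodDist p q) := by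
      rfl
    rw [e2, e4]
    exact hsub
  -- identify the last term of hsub' with the `V`-term
  have hEV : ent (push (fun z : Fvec n × Fvec n =>
        (z.1 + z.2, (W.mkQ z.1 + W.mkQ z.2, (V.mkQ z.1, V.mkQ z.2)))) (prodDist p q))
      = ent (push (fun z : Fvec n × Fvec n =>
        (z.1 + z.2, (V.mkQ z.1, V.mkQ z.2))) (prodDist p q)) := by
    have hcompτ : push (fun s : Fvec n × ((Fvec n ⧸ V) × (Fvec n ⧸ V)) =>
          (s.1, (W.mkQ s.1, s.2)))
          (push (fun z : Fvec n × Fvec n =>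
            (z.1 + z.2, (V.mkQ z.1, V.mkQ z.2))) (prodDist p q))
        = push (fun z : Fvec n × Fvec n =>
          (z.1 + z.2, (W.mkQ z.1 + W.mkQ z.2, (V.mkQ z.1, V.mkQ z.2)))) (prodDist p q) := by
      rw [push_push]
      congr 1
    rw [← hcompτ]
    refine ent_push_inj _ ?_ _
    intro a b h
    simp only [Prod.mk.injEq] at h
    exact Prod.ext h.1 h.2.2
  rw [hL, hWid, hMid, hsp, hsq, hsp', hsq', hmixp, hmixq]
  rw [hEV] at hsub'
  linarith [hsub']
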